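/- If G is a directed veto interval graph containing a directed path a_1 → a_2 → ... → a_k with k ≥ 3, then a_1 and a_k are not adjacent in the underlying veto interval graph. -/
import Mathlib


/-- A veto interval: a closed interval `[l, r]` with a veto mark `v`, `l < v < r`. -/
structure VetoInterval where
  l : ℝ
  v : ℝ
  r : ℝ
  hlv : l < v
  hvr : v < r

/-- Two veto intervals are adjacent iff they intersect and neither contains
the veto mark of the other. -/
def VIAdj (a b : VetoInterval) : Prop :=
  (a.v < b.l ∧ b.l < a.r ∧ a.r < b.v) ∨ (b.v < a.l ∧ a.l < b.r ∧ b.r < a.v)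

/-- `G` is a veto interval graph. -/
def IsVIGraph {V : Type*} (G : SimpleGraph V) : Prop :=
  ∃ f : V → VetoInterval, ∀ a b : V, G.Adj a b ↔ VIAdj (f a) (f b)

/-- Directed edge: `a` intersects `b` on the left. -/
def DirVIAdj (a b : VetoInterval) : Prop :=
  a.v < b.l ∧ b.l < a.r ∧ a.r < b.v

/-- If a directed veto interval graph contains a directed path
`a 0 → a 1 → ⋯ → a (k-1)` with `k ≥ 3`, then its endpoints are not adjacent
in the underlying veto interval graph. -/
theorem stmt_0 {V : Type*} (G : SimpleGraph V) (f : V → VetoInterval)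
    (hrep : ∀ x y : V, G.Adj x y ↔ VIAdj (f x) (f y))
    (k : ℕ) (hk : 3 ≤ k) (a : ℕ → V)
    (hpath : ∀ i, i < k - 1 → DirVIAdj (f (a i)) (f (a (i + 1)))) :
    ¬ G.Adj (a 0) (a (k - 1)) := by
  have key : ∀ i, 2 ≤ i → i ≤ k - 1 → (f (a 0)).r < (f (a i)).l := by
    intro i h2 hle
    induction i, h2 using Nat.le_induction with
    | base =>
      have h0 := hpath 0 (by omega)
      have h1 := hpath 1 (by omega)
      calc (f (a 0)).r < (f (a 1)).v := h0.2.2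
        _ < (f (a 2)).l := h1.1
    | succ n hn ih =>
      have hn' := hpath n (by omega)
      have := ih (by omega)
      calc (f (a 0)).r < (f (a n)).l := this
        _ < (f (a n)).v := (f (a n)).hlv
        _ < (f (a (n + 1))).l := hn'.1
  intro hadj
  have h := (hrep _ _).mp hadj
  have hkey := key (k - 1) (by omega) le_rfl
  have h0 := (f (a 0)).hlv
  have h1 := (f (a (k - 1))).hlv
  have h2 := (f (a (k - 1))).hvr
  have h3 := (f (a 0)).hvr
  rcases h with ⟨_, hbl, _⟩ | ⟨hv, _, hr⟩ <;> linarith
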